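/- arXiv:2303.14397 — 6 statements merged into one kernel-verified Lean document; each statement's English description precedes it below -/
import Mathlib

section
/- For all integers d ≥ 3, one has ∏_{k=1}^{d-2} (1 + 1/k²) · (1 + 1/(2(d-1)²)) ≥ (1 + 1/(d-1))^{d-1}. -/
open Finset

lemma bern_upper (n : ℕ) (x : ℝ) (hx0 : 0 ≤ x) (hx1 : x ≤ 1) :
    (1 - x) ^ n ≤ 1 / (1 + n * x) := by
  have hpos : (0:ℝ) < 1 + n * x := by positivity
  rw [le_div_iff₀ hpos]
  have h1 : (1:ℝ) + n * x ≤ (1 + x) ^ n := by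
    have := one_add_mul_le_pow (a := x) (by linarith) n
    linarith
  have h2 : (1 - x) ^ n * (1 + x) ^ n ≤ 1 := by
    rw [← mul_pow]
    have e : (1 - x) * (1 + x) = 1 - x ^ 2 := by ring
    rw [e]
    exact pow_le_one₀ (by nlinarith) (by nlinarith)
  have h3 : (0:ℝ) ≤ (1 - x) ^ n := pow_nonneg (by linarith) n
  calc (1 - x) ^ n * (1 + ↑n * x) ≤ (1 - x) ^ n * (1 + x) ^ n :=
        mul_le_mul_of_nonneg_left h1 h3
    _ ≤ 1 := h2

lemma key (n : ℕ) (hn : 2 ≤ n) :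
    (1 + 1 / ((n:ℝ) + 1)) ^ (n + 1) * (1 + 1 / (2 * (n:ℝ) ^ 2))
      ≤ (1 + 1 / (n:ℝ)) ^ n * ((1 + 1 / (n:ℝ) ^ 2) * (1 + 1 / (2 * ((n:ℝ) + 1) ^ 2))) := by
  have hm2 : (2:ℝ) ≤ (n:ℝ) := by exact_mod_cast hn
  set m : ℝ := (n : ℝ) with hm
  have hm0 : (0:ℝ) < m := by linarith
  have hm1 : (0:ℝ) < m + 1 := by linarith
  have hb : (1 + 1 / (m + 1)) = (m + 2) / (m + 1) := by field_simp; ring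
  have hb2 : (1 + 1 / m) = (m + 1) / m := by field_simp
  have hsplit : (1 + 1 / (m + 1)) ^ (n + 1)
      = (m + 2) / (m + 1) * ((1 + 1 / m) ^ n * (1 - 1 / (m + 1) ^ 2) ^ n) := by
    rw [hb, hb2, ← mul_pow, pow_succ]
    have e : (m + 1) / m * (1 - 1 / (m + 1) ^ 2) = (m + 2) / (m + 1) := by
      field_simp; ring
    rw [e, mul_comm]
  have hbern := bern_upper n (1 / (m + 1) ^ 2) (by positivity)
    (by rw [div_le_one (by positivity)]; nlinarith)
  have hx : (1:ℝ) + n * (1 / (m + 1) ^ 2) = 1 + m / (m + 1) ^ 2 := by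
    rw [← hm]; ring
  rw [hx] at hbern
  have hq : (0:ℝ) < 1 + m / (m + 1) ^ 2 := by positivity
  have hpown : (0:ℝ) ≤ (1 + 1 / m) ^ n := by positivity
  have h1 : (1 + 1 / (m + 1)) ^ (n + 1)
      ≤ (m + 2) / (m + 1) * ((1 + 1 / m) ^ n * (1 / (1 + m / (m + 1) ^ 2))) := by
    rw [hsplit]
    apply mul_le_mul_of_nonneg_left _ (by positivity)
    exact mul_le_mul_of_nonneg_left hbern hpown
  have hpoly : (m + 2) / (m + 1) * (1 / (1 + m / (m + 1) ^ 2)) * (1 + 1 / (2 * m ^ 2))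
      ≤ (1 + 1 / m ^ 2) * (1 + 1 / (2 * (m + 1) ^ 2)) := by
    have hne1 : m ≠ 0 := ne_of_gt hm0
    have hne2 : m + 1 ≠ 0 := ne_of_gt hm1
    have hq3 : (0:ℝ) < m ^ 2 + 3 * m + 1 := by positivity
    have hP : (m + 2) * (m + 1) ^ 3 * (2 * m ^ 2 + 1)
        ≤ (m ^ 2 + 1) * (2 * m ^ 2 + 4 * m + 3) * (m ^ 2 + 3 * m + 1) := by
      nlinarith [pow_pos hm0 3, sq_nonneg m, hm0.le]
    have hL : (m + 2) / (m + 1) * (1 / (1 + m / (m + 1) ^ 2)) * (1 + 1 / (2 * m ^ 2))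
        = (m + 2) * (m + 1) * (2 * m ^ 2 + 1) / ((m ^ 2 + 3 * m + 1) * (2 * m ^ 2)) := by
      rw [show (1:ℝ) + m / (m + 1) ^ 2 = (m ^ 2 + 3 * m + 1) / (m + 1) ^ 2 by
        field_simp; ring]
      field_simp
    have hR : (1 + 1 / m ^ 2) * (1 + 1 / (2 * (m + 1) ^ 2))
        = (m ^ 2 + 1) * (2 * m ^ 2 + 4 * m + 3) / (2 * m ^ 2 * (m + 1) ^ 2) := by
      field_simp; ring
    rw [hL, hR, div_le_div_iff₀ (by positivity) (by positivity)]
    nlinarith [mul_le_mul_of_nonneg_left hP (by positivity : (0:ℝ) ≤ 2 * m ^ 2)]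
  calc (1 + 1 / (m + 1)) ^ (n + 1) * (1 + 1 / (2 * m ^ 2))
      ≤ (m + 2) / (m + 1) * ((1 + 1 / m) ^ n * (1 / (1 + m / (m + 1) ^ 2)))
          * (1 + 1 / (2 * m ^ 2)) :=
        mul_le_mul_of_nonneg_right h1 (by positivity)
    _ = (1 + 1 / m) ^ n
          * ((m + 2) / (m + 1) * (1 / (1 + m / (m + 1) ^ 2)) * (1 + 1 / (2 * m ^ 2))) := by
        ring
    _ ≤ (1 + 1 / m) ^ n * ((1 + 1 / m ^ 2) * (1 + 1 / (2 * (m + 1) ^ 2))) :=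
        mul_le_mul_of_nonneg_left hpoly hpown

lemma aux (n : ℕ) (hn : 2 ≤ n) :
    (∏ k ∈ Finset.Icc 1 (n - 1), (1 + 1 / (k : ℝ) ^ 2)) * (1 + 1 / (2 * (n : ℝ) ^ 2))
      ≥ (1 + 1 / (n : ℝ)) ^ n := by
  induction n, hn using Nat.le_induction with
  | base => norm_num
  | succ n hn ih =>
    have h1n : 1 ≤ n := by omega
    have e : n - 1 + 1 = n := by omega
    have hprod : (∏ k ∈ Finset.Icc 1 (n + 1 - 1), (1 + 1 / (k : ℝ) ^ 2))
        = (∏ k ∈ Finset.Icc 1 (n - 1), (1 + 1 / (k : ℝ) ^ 2)) * (1 + 1 / (n : ℝ) ^ 2) := by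
      rw [show n + 1 - 1 = n from rfl, ← e, Finset.prod_Icc_succ_top (by omega), e]
    rw [hprod]
    have hm0 : (0:ℝ) < (n:ℝ) := by exact_mod_cast (by omega : 0 < n)
    have hd1 : (0:ℝ) < 1 + 1 / (2 * (n:ℝ) ^ 2) := by positivity
    have hkey := key n hn
    push_cast at hkey ⊢
    have hih : (∏ k ∈ Finset.Icc 1 (n - 1), (1 + 1 / (k : ℝ) ^ 2))
        ≥ (1 + 1 / (n : ℝ)) ^ n / (1 + 1 / (2 * (n : ℝ) ^ 2)) := by
      rw [ge_iff_le, div_le_iff₀ hd1]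
      exact ih
    calc (1 + 1 / ((n:ℝ) + 1)) ^ (n + 1)
        = (1 + 1 / ((n:ℝ) + 1)) ^ (n + 1) * (1 + 1 / (2 * (n:ℝ) ^ 2))
            / (1 + 1 / (2 * (n:ℝ) ^ 2)) := by field_simp
      _ ≤ (1 + 1 / (n:ℝ)) ^ n * ((1 + 1 / (n:ℝ) ^ 2) * (1 + 1 / (2 * ((n:ℝ) + 1) ^ 2)))
            / (1 + 1 / (2 * (n:ℝ) ^ 2)) := by gcongr
      _ = ((1 + 1 / (n:ℝ)) ^ n / (1 + 1 / (2 * (n:ℝ) ^ 2))) * (1 + 1 / (n:ℝ) ^ 2)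
            * (1 + 1 / (2 * ((n:ℝ) + 1) ^ 2)) := by ring
      _ ≤ (∏ k ∈ Finset.Icc 1 (n - 1), (1 + 1 / (k : ℝ) ^ 2)) * (1 + 1 / (n:ℝ) ^ 2)
            * (1 + 1 / (2 * ((n:ℝ) + 1) ^ 2)) := by
          apply mul_le_mul_of_nonneg_right _ (by positivity)
          apply mul_le_mul_of_nonneg_right hih (by positivity)

theorem stmt_1 (d : ℕ) (hd : 3 ≤ d) :
    (∏ k ∈ Finset.Icc 1 (d - 2), (1 + 1 / (k : ℝ) ^ 2)) * (1 + 1 / (2 * ((d : ℝ) - 1) ^ 2))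
      ≥ (1 + 1 / ((d : ℝ) - 1)) ^ (d - 1) := by
  have h := aux (d - 1) (by omega)
  have hc : ((d - 1 : ℕ) : ℝ) = (d : ℝ) - 1 := by
    push_cast [Nat.cast_sub (by omega : 1 ≤ d)]; ring
  rw [hc] at h
  have e : d - 1 - 1 = d - 2 := by omega
  rw [e] at h
  exact h
end

section
/- For all real numbers 0 < a < b and γ ∈ (0,1), one has (1/2)·a^γ + (b-a)^γ ≤ b^γ · (1 + 2^{-1/(1-γ)})^{1-γ}. -/
lemma key_stmt3 (u γ : ℝ) (hu0 : 0 < u) (hu1 : u < 1) (hg0 : 0 < γ) (hg1 : γ < 1) :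
    (1/2) * u ^ γ + (1 - u) ^ γ ≤ (1 + 2 ^ (-(1/(1-γ)))) ^ (1-γ) := by
  have h1g : (0:ℝ) < 1 - γ := by linarith
  set c : ℝ := 2 ^ (-(1/(1-γ))) with hc
  have hc0 : 0 < c := Real.rpow_pos_of_pos two_pos _
  have hs0 : (0:ℝ) < 1 + c := by linarith
  have hchalf : c ^ (1-γ) = 1/2 := by
    rw [hc, ← Real.rpow_mul (by norm_num : (0:ℝ) ≤ 2),
      show (-(1/(1-γ)))*(1-γ) = -1 by field_simp,
      show (-1:ℝ) = -(1:ℝ) from rfl, Real.rpow_neg (by norm_num), Real.rpow_one]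
    norm_num
  set s : ℝ := 1 + c with hs
  set w1 : ℝ := c / s with hw1
  set w2 : ℝ := 1 / s with hw2
  have hw1p : 0 < w1 := div_pos hc0 hs0
  have hw2p : 0 < w2 := div_pos one_pos hs0
  have hsum : w1 + w2 = 1 := by rw [hw1, hw2, ← add_div, div_eq_one_iff_eq hs0.ne']; linarith
  have hconc := (Real.strictConcaveOn_rpow hg0 hg1).concaveOn
  have h := hconc.2 (Set.mem_Ici.mpr (show (0:ℝ) ≤ u/w1 by positivity))
      (Set.mem_Ici.mpr (show (0:ℝ) ≤ (1-u)/w2 from div_nonneg (by linarith) hw2p.le)) hw1p.le hw2p.le hsum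
  simp only [smul_eq_mul] at h
  have hpt : w1 * (u/w1) + w2 * ((1-u)/w2) = 1 := by field_simp; ring
  rw [hpt, Real.one_rpow] at h
  have e1 : w1 * (u/w1)^γ = w1^(1-γ) * u^γ := by
    rw [Real.div_rpow hu0.le hw1p.le, Real.rpow_sub hw1p, Real.rpow_one]
    field_simp
  have e2 : w2 * ((1-u)/w2)^γ = w2^(1-γ) * (1-u)^γ := by
    rw [Real.div_rpow (by linarith) hw2p.le, Real.rpow_sub hw2p, Real.rpow_one]
    field_simp
  rw [e1, e2] at h
  have hs1 : 0 < s^(1-γ) := Real.rpow_pos_of_pos hs0 _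
  have hA : w1^(1-γ) * s^(1-γ) = 1/2 := by
    rw [← Real.mul_rpow hw1p.le hs0.le, show w1*s = c by rw [hw1, div_mul_cancel₀ c hs0.ne']]
    exact hchalf
  have hB : w2^(1-γ) * s^(1-γ) = 1 := by
    rw [← Real.mul_rpow hw2p.le hs0.le, show w2*s = 1 by rw [hw2, div_mul_cancel₀ (1:ℝ) hs0.ne']]
    exact Real.one_rpow _
  calc (1/2) * u ^ γ + (1 - u) ^ γ
      = (w1^(1-γ) * u^γ + w2^(1-γ) * (1-u)^γ) * s^(1-γ) := by
        linear_combination -u^γ * hA - (1-u)^γ * hB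
    _ ≤ 1 * s^(1-γ) := mul_le_mul_of_nonneg_right h hs1.le
    _ = s^(1-γ) := one_mul _

theorem stmt_3 (a b γ : ℝ) (ha : 0 < a) (hab : a < b) (hγ : γ ∈ Set.Ioo (0 : ℝ) 1) :
    (1 / 2) * a ^ γ + (b - a) ^ γ ≤ b ^ γ * (1 + 2 ^ (-(1 / (1 - γ)))) ^ (1 - γ) := by
  have hb : 0 < b := ha.trans hab
  have h := key_stmt3 (a/b) γ (div_pos ha hb) ((div_lt_one hb).mpr hab) hγ.1 hγ.2
  have hbγ : 0 < b^γ := Real.rpow_pos_of_pos hb _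
  have h2 := mul_le_mul_of_nonneg_left h hbγ.le
  have e1 : (a/b)^γ * b^γ = a^γ := by
    rw [Real.div_rpow ha.le hb.le]
    field_simp
  have e2 : (1 - a/b) = (b-a)/b := by field_simp
  have e3 : ((b-a)/b)^γ * b^γ = (b-a)^γ := by
    rw [Real.div_rpow (by linarith) hb.le]
    field_simp
  rw [e2] at h2
  calc (1 / 2) * a ^ γ + (b - a) ^ γ
      = b^γ * ((1/2) * (a/b)^γ + ((b-a)/b)^γ) := by
        linear_combination (-(1:ℝ)/2) * e1 - e3
    _ ≤ b ^ γ * (1 + 2 ^ (-(1 / (1 - γ)))) ^ (1 - γ) := h2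
end

section
/- For all integers a > b ≥ 1, the binomial coefficient C(a,b) satisfies C(a,b) > (1/(2√a)) · (a/b)^b. -/
/-! Writing `C(a, b) = ∏_{i < b} (a - i) / (b - i)`, every factor is at least `a / b`, so
`(a / b) ^ b ≤ C(a, b)`; the factor `1 / (2 √a)` is below `1`, which makes the inequality strict. -/

namespace Nat

theorem pow_le_choose_mul_pow {n k : ℕ} (hkn : k ≤ n) : n ^ k ≤ n.choose k * k ^ k := by
  have hfactor : ∀ i ∈ Finset.range k, n * (k - i) ≤ (n - i) * k := fun i _ => by
    rw [Nat.mul_sub, Nat.sub_mul, Nat.mul_comm n i]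
    exact Nat.sub_le_sub_left (Nat.mul_le_mul_left i hkn) _
  have hprod : n ^ k * k ! ≤ n.descFactorial k * k ^ k := by
    simpa only [Finset.prod_mul_distrib, Finset.prod_const, Finset.card_range,
      ← descFactorial_eq_prod_range, descFactorial_self] using Finset.prod_le_prod' hfactor
  rw [descFactorial_eq_factorial_mul_choose] at hprod
  exact Nat.le_of_mul_le_mul_right (by linarith) k.factorial_pos

theorem div_pow_le_choose {α : Type*} [Semifield α] [LinearOrder α] [IsStrictOrderedRing α]
    {n k : ℕ} (hkn : k ≤ n) : ((n : α) / k) ^ k ≤ n.choose k := by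
  rw [div_pow, div_le_iff₀ (mod_cast Nat.pow_self_pos)]
  exact_mod_cast pow_le_choose_mul_pow hkn

end Nat

theorem stmt_5_general (a b : ℕ) (hab : b < a) :
    (1 / (2 * Real.sqrt a)) * ((a : ℝ) / b) ^ b < (a.choose b : ℝ) := by
  have hchoose : (0 : ℝ) < a.choose b := mod_cast Nat.choose_pos hab.le
  have hsqrt : (1 : ℝ) ≤ Real.sqrt a := Real.one_le_sqrt.mpr (mod_cast hab.pos)
  have hcoeff : 1 / (2 * Real.sqrt a) < 1 := by
    rw [div_lt_one (by positivity)]; linarith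
  calc (1 / (2 * Real.sqrt a)) * ((a : ℝ) / b) ^ b
      ≤ (1 / (2 * Real.sqrt a)) * a.choose b := by gcongr; exact Nat.div_pow_le_choose hab.le
    _ < a.choose b := mul_lt_of_lt_one_left hchoose hcoeff

theorem stmt_5 (a b : ℕ) (hb : 1 ≤ b) (hab : b < a) :
    (1 / (2 * Real.sqrt a)) * ((a : ℝ) / b) ^ b < (a.choose b : ℝ) :=
  stmt_5_general a b hab
end

section
/- Let d ≥ 2 and n ≥ 1 be integers, and let Q ⊆ ℤ_{≥0}^d be a lower set with |Q| = n. Then the maximal antichain M(Q) of maximal elements of Q (with respect to the coordinatewise partial order) has cardinality at most d·n^{1-1/d}. -/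
/-- `Q` is a lower (downward closed) set in `ℤ_{≥0}^d`. -/
def IsLowerFinset {d : ℕ} (Q : Finset (Fin d → ℕ)) : Prop :=
  ∀ x ∈ Q, ∀ y : Fin d → ℕ, (∀ i, y i ≤ x i) → y ∈ Q

/-- The set of maximal elements of `Q` with respect to the coordinatewise order. -/
def maxAntichain {d : ℕ} (Q : Finset (Fin d → ℕ)) : Finset (Fin d → ℕ) :=
  Q.filter (fun q => ∀ p ∈ Q, (∀ i, q i ≤ p i) → p = q)

namespace Stmt7

variable {d : ℕ}

def slice (Q : Finset (Fin (d+1) → ℕ)) (k : ℕ) : Finset (Fin d → ℕ) :=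
  (Q.filter (fun x => x (Fin.last d) = k)).image Fin.init

lemma mem_slice {Q : Finset (Fin (d+1) → ℕ)} {k : ℕ} {p : Fin d → ℕ} :
    p ∈ slice Q k ↔ Fin.snoc p k ∈ Q := by
  constructor
  · intro h
    simp only [slice, Finset.mem_image, Finset.mem_filter] at h
    obtain ⟨x, ⟨hxQ, hxk⟩, rfl⟩ := h
    rwa [← hxk, Fin.snoc_init_self]
  · intro h
    simp only [slice, Finset.mem_image, Finset.mem_filter]
    exact ⟨Fin.snoc p k, ⟨h, by simp⟩, by simp⟩

lemma snoc_le_snoc {p q : Fin d → ℕ} {a b : ℕ} (h : ∀ i, p i ≤ q i) (hab : a ≤ b) :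
    ∀ i, (Fin.snoc p a : Fin (d+1) → ℕ) i ≤ (Fin.snoc q b : Fin (d+1) → ℕ) i := by
  intro i
  induction i using Fin.lastCases with
  | last => simpa using hab
  | cast i => simpa using h i

lemma slice_lower {Q : Finset (Fin (d+1) → ℕ)} (hQ : IsLowerFinset Q) (k : ℕ) :
    IsLowerFinset (slice Q k) := by
  intro p hp y hy
  rw [mem_slice] at hp ⊢
  exact hQ _ hp _ (snoc_le_snoc hy le_rfl)

lemma slice_anti {Q : Finset (Fin (d+1) → ℕ)} (hQ : IsLowerFinset Q) {j k : ℕ} (hjk : j ≤ k) :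
    slice Q k ⊆ slice Q j := by
  intro p hp
  rw [mem_slice] at hp ⊢
  exact hQ _ hp _ (snoc_le_snoc (fun _ => le_rfl) hjk)

lemma init_injOn {k : ℕ} {s : Finset (Fin (d+1) → ℕ)}
    (hs : ∀ x ∈ s, x (Fin.last d) = k) : Set.InjOn (Fin.init : (Fin (d+1) → ℕ) → Fin d → ℕ) ↑s := by
  intro x hx y hy hxy
  have : Fin.snoc (Fin.init x) (x (Fin.last d)) = Fin.snoc (Fin.init y) (y (Fin.last d)) := by
    rw [hs x hx, hs y hy, hxy]
  rwa [Fin.snoc_init_self, Fin.snoc_init_self] at this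

lemma card_slice (Q : Finset (Fin (d+1) → ℕ)) (k : ℕ) :
    (slice Q k).card = (Q.filter (fun x => x (Fin.last d) = k)).card :=
  Finset.card_image_of_injOn (init_injOn (fun x hx => (Finset.mem_filter.mp hx).2))

lemma last_lt_card {Q : Finset (Fin (d+1) → ℕ)} (hQ : IsLowerFinset Q) {x} (hx : x ∈ Q) :
    x (Fin.last d) < Q.card := by
  set t := x (Fin.last d) with ht
  have hsub : (Finset.range (t + 1)).image (fun j => Fin.snoc (Fin.init x) j) ⊆ Q := by
    intro y hy
    simp only [Finset.mem_image, Finset.mem_range] at hy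
    obtain ⟨j, hj, rfl⟩ := hy
    apply hQ x hx
    intro i
    conv_rhs => rw [← Fin.snoc_init_self x]
    exact snoc_le_snoc (fun _ => le_rfl) (by omega) i
  have hcard : ((Finset.range (t + 1)).image (fun j => Fin.snoc (Fin.init x) j)).card = t + 1 := by
    rw [Finset.card_image_of_injective _ ?_, Finset.card_range]
    intro a b hab
    have := congrArg (fun f : Fin (d+1) → ℕ => f (Fin.last d)) hab
    simpa using this
  have := Finset.card_le_card hsub
  omega

lemma card_filter_sum {s : Finset (Fin (d+1) → ℕ)} {N : ℕ}
    (h : ∀ x ∈ s, x (Fin.last d) < N) :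
    s.card = ∑ k ∈ Finset.range N, (s.filter (fun x => x (Fin.last d) = k)).card :=
  Finset.card_eq_sum_card_fiberwise (by intro x hx; simpa using h x hx)


lemma mem_maxAntichain {Q : Finset (Fin d → ℕ)} {q : Fin d → ℕ} :
    q ∈ maxAntichain Q ↔ q ∈ Q ∧ ∀ p ∈ Q, (∀ i, q i ≤ p i) → p = q := by
  simp [maxAntichain]

lemma mk_le_max_slice {Q : Finset (Fin (d+1) → ℕ)} (k : ℕ) :
    ((maxAntichain Q).filter (fun q => q (Fin.last d) = k)).card ≤
      (maxAntichain (slice Q k)).card := by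
  apply Finset.card_le_card_of_injOn Fin.init
  · intro q hq
    rw [Finset.mem_coe, Finset.mem_filter, mem_maxAntichain] at hq
    obtain ⟨⟨hqQ, hqmax⟩, hqk⟩ := hq
    have hq_eq : (Fin.snoc (Fin.init q) k : Fin (d+1) → ℕ) = q := by
      rw [← hqk]; exact Fin.snoc_init_self q
    rw [Finset.mem_coe, mem_maxAntichain]
    refine ⟨by rw [mem_slice, hq_eq]; exact hqQ, ?_⟩
    intro p hp hle
    rw [mem_slice] at hp
    have hle2 : ∀ i, q i ≤ (Fin.snoc p k : Fin (d+1) → ℕ) i := by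
      have := snoc_le_snoc (d := d) hle (le_refl k)
      rwa [hq_eq] at this
    have := hqmax _ hp hle2
    rw [← this, Fin.init_snoc]
  · apply init_injOn
    intro x hx
    exact (Finset.mem_filter.mp hx).2

lemma mk_le_diff {Q : Finset (Fin (d+1) → ℕ)} (hQ : IsLowerFinset Q) (k : ℕ) :
    ((maxAntichain Q).filter (fun q => q (Fin.last d) = k)).card ≤
      (slice Q k).card - (slice Q (k+1)).card := by
  have hsub : slice Q (k+1) ⊆ slice Q k := slice_anti hQ (Nat.le_succ k)
  rw [← Finset.card_sdiff_of_subset hsub]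
  apply Finset.card_le_card_of_injOn Fin.init
  · intro q hq
    rw [Finset.mem_coe, Finset.mem_filter, mem_maxAntichain] at hq
    obtain ⟨⟨hqQ, hqmax⟩, hqk⟩ := hq
    have hq_eq : (Fin.snoc (Fin.init q) k : Fin (d+1) → ℕ) = q := by
      rw [← hqk]; exact Fin.snoc_init_self q
    rw [Finset.mem_coe, Finset.mem_sdiff]
    refine ⟨by rw [mem_slice, hq_eq]; exact hqQ, ?_⟩
    intro hcon
    rw [mem_slice] at hcon
    have hle : ∀ i, q i ≤ (Fin.snoc (Fin.init q) (k+1) : Fin (d+1) → ℕ) i := by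
      have := snoc_le_snoc (d := d) (p := Fin.init q) (fun _ => le_refl _) (Nat.le_succ k)
      rwa [hq_eq] at this
    have heq := hqmax _ hcon hle
    have : (Fin.snoc (Fin.init q) (k+1) : Fin (d+1) → ℕ) (Fin.last d) = q (Fin.last d) := by
      rw [heq]
    simp [hqk] at this
  · apply init_injOn
    intro x hx
    exact (Finset.mem_filter.mp hx).2

lemma jensen (K : ℕ) (f : ℕ → ℝ) (hf : ∀ k ∈ Finset.range K, 0 ≤ f k) {β : ℝ}
    (hβ0 : 0 ≤ β) (hβ1 : β ≤ 1) :
    ∑ k ∈ Finset.range K, f k ^ β ≤ (K : ℝ) ^ ((1:ℝ) - β) * (∑ k ∈ Finset.range K, f k) ^ β := by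
  rcases Nat.eq_zero_or_pos K with rfl | hK
  · simp
    positivity
  rcases eq_or_lt_of_le hβ0 with rfl | hβpos
  · simp [Real.rpow_zero, Real.rpow_one, Finset.sum_const, Finset.card_range]
  have hKR : (0:ℝ) < K := by exact_mod_cast hK
  have hw' : ∑ _k ∈ Finset.range K, (K:ℝ)⁻¹ = 1 := by
    simp [Finset.sum_const, Finset.card_range]
    field_simp
  have hp : (1:ℝ) ≤ 1 / β := by
    rw [le_div_iff₀ hβpos]; simpa using hβ1
  have h := Real.arith_mean_le_rpow_mean (Finset.range K) (fun _ => (K:ℝ)⁻¹)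
      (fun k => f k ^ β) (fun i _ => by positivity) hw'
      (fun i hi => Real.rpow_nonneg (hf i hi) β) hp
  have hsimp : ∀ i ∈ Finset.range K, (K:ℝ)⁻¹ * (f i ^ β) ^ (1/β) = (K:ℝ)⁻¹ * f i := by
    intro i hi
    rw [one_div, Real.rpow_rpow_inv (hf i hi) (ne_of_gt hβpos)]
  rw [Finset.sum_congr rfl hsimp, one_div_one_div, ← Finset.mul_sum, ← Finset.mul_sum] at h
  have hsum0 : (0:ℝ) ≤ ∑ k ∈ Finset.range K, f k := Finset.sum_nonneg hf
  calc ∑ k ∈ Finset.range K, f k ^ β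
      = (K:ℝ) * ((K:ℝ)⁻¹ * ∑ k ∈ Finset.range K, f k ^ β) := by field_simp
    _ ≤ (K:ℝ) * (((K:ℝ)⁻¹ * ∑ k ∈ Finset.range K, f k) ^ β) :=
        mul_le_mul_of_nonneg_left h hKR.le
    _ = (K : ℝ) ^ ((1:ℝ) - β) * (∑ k ∈ Finset.range K, f k) ^ β := by
        rw [Real.mul_rpow (by positivity) hsum0, Real.inv_rpow hKR.le,
          Real.rpow_sub hKR, Real.rpow_one]
        ring


theorem key (e : ℕ) : ∀ n : ℕ, 1 ≤ n → ∀ Q : Finset (Fin (e+1) → ℕ),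
    IsLowerFinset Q → Q.card = n →
    ((maxAntichain Q).card : ℝ) ≤ ((e:ℝ)+1) * (n:ℝ) ^ (1 - 1/((e:ℝ)+1)) := by
  induction e with
  | zero =>
    intro n hn Q hQ hcard
    have hM : (maxAntichain Q).card ≤ 1 := by
      rw [Finset.card_le_one]
      intro a ha b hb
      rw [mem_maxAntichain] at ha hb
      rcases le_total (a 0) (b 0) with h | h
      · exact (ha.2 b hb.1 (fun i => by rw [Fin.fin_one_eq_zero i]; exact h)).symm
      · exact hb.2 a ha.1 (fun i => by rw [Fin.fin_one_eq_zero i]; exact h)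
    have h1 : ((maxAntichain Q).card : ℝ) ≤ 1 := by exact_mod_cast hM
    simp only [Nat.cast_zero]
    norm_num [Real.rpow_zero]
    exact hM
  | succ e IH =>
    intro n hn Q hQ hcard
    set nk : ℕ → ℕ := fun k => (slice Q k).card with hnk
    set mk : ℕ → ℕ := fun k =>
      ((maxAntichain Q).filter (fun q => q (Fin.last (e+1)) = k)).card with hmk
    have hMQ : maxAntichain Q ⊆ Q := Finset.filter_subset _ _
    have hlast : ∀ x ∈ Q, x (Fin.last (e+1)) < n := by
      intro x hx; rw [← hcard]; exact last_lt_card hQ hx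
    have hMsum : (maxAntichain Q).card = ∑ k ∈ Finset.range n, mk k :=
      card_filter_sum (fun x hx => hlast x (hMQ hx))
    have hnksum : ∀ N, n ≤ N → ∑ k ∈ Finset.range N, nk k = n := by
      intro N hN
      have : Q.card = ∑ k ∈ Finset.range N,
          (Q.filter (fun x => x (Fin.last (e+1)) = k)).card :=
        card_filter_sum (fun x hx => lt_of_lt_of_le (hlast x hx) hN)
      rw [← hcard, this]
      exact Finset.sum_congr rfl (fun k _ => (card_slice Q k))
    have hanti : ∀ j k : ℕ, j ≤ k → nk k ≤ nk j :=
      fun j k hjk => Finset.card_le_card (slice_anti hQ hjk)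
    have hmk1 : ∀ k, mk k ≤ (maxAntichain (slice Q k)).card := fun k => mk_le_max_slice k
    have hmk2 : ∀ k, mk k ≤ nk k - nk (k+1) := fun k => mk_le_diff hQ k
    -- real setup
    have hn1 : (1:ℝ) ≤ (n:ℝ) := by exact_mod_cast hn
    have hnpos : (0:ℝ) < (n:ℝ) := by linarith
    have hdr : (0:ℝ) < (e:ℝ) + 1 + 1 := by positivity
    have hDr : (0:ℝ) < (e:ℝ) + 1 := by positivity
    have hβ0 : (0:ℝ) ≤ 1 - 1/((e:ℝ)+1) := by
      have : 1/((e:ℝ)+1) ≤ 1 := by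
        rw [div_le_one hDr]; linarith
      linarith
    have hβ1 : (1:ℝ) - 1/((e:ℝ)+1) ≤ 1 := by
      have : (0:ℝ) ≤ 1/((e:ℝ)+1) := by positivity
      linarith
    set K : ℕ := ⌊(n:ℝ) ^ (1/((e:ℝ)+1+1))⌋₊ with hK
    have hrpos : (0:ℝ) < (n:ℝ) ^ (1/((e:ℝ)+1+1)) := Real.rpow_pos_of_pos hnpos _
    have hr1 : (1:ℝ) ≤ (n:ℝ) ^ (1/((e:ℝ)+1+1)) := by
      have h := Real.rpow_le_rpow zero_le_one hn1
        (le_of_lt (by positivity : (0:ℝ) < 1/((e:ℝ)+1+1)))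
      rwa [Real.one_rpow] at h
    have hKle : (K:ℝ) ≤ (n:ℝ) ^ (1/((e:ℝ)+1+1)) := Nat.floor_le hrpos.le
    have hKgt : (n:ℝ) ^ (1/((e:ℝ)+1+1)) < (K:ℝ) + 1 :=
      Nat.lt_floor_add_one _
    have hKn : K ≤ n := by
      have h1 : (n:ℝ) ^ (1/((e:ℝ)+1+1)) ≤ (n:ℝ) := by
        calc (n:ℝ) ^ (1/((e:ℝ)+1+1)) ≤ (n:ℝ) ^ (1:ℝ) :=
              Real.rpow_le_rpow_of_exponent_le hn1 (by rw [div_le_one hdr]; linarith)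
          _ = (n:ℝ) := Real.rpow_one _
      have h2 := Nat.floor_mono h1
      rwa [Nat.floor_natCast] at h2
    -- per-slice bound
    have hper : ∀ k, (mk k : ℝ) ≤ ((e:ℝ)+1) * (nk k : ℝ) ^ (1 - 1/((e:ℝ)+1)) := by
      intro k
      rcases Nat.eq_zero_or_pos (nk k) with h0 | hpos
      · have hz : mk k = 0 := by
          have h2 := hmk2 k
          omega
        rw [hz, h0]
        simp only [Nat.cast_zero]
        positivity
      · calc (mk k : ℝ) ≤ ((maxAntichain (slice Q k)).card : ℝ) := by exact_mod_cast hmk1 k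
          _ ≤ ((e:ℝ)+1) * ((nk k : ℕ) : ℝ) ^ (1 - 1/((e:ℝ)+1)) :=
              IH (nk k) hpos (slice Q k) (slice_lower hQ k) rfl
    -- first sum
    have hsubsum : (∑ k ∈ Finset.range K, (nk k : ℝ)) ≤ (n:ℝ) := by
      have h1 : ∑ k ∈ Finset.range K, nk k ≤ ∑ k ∈ Finset.range n, nk k :=
        Finset.sum_le_sum_of_subset (Finset.range_subset_range.mpr hKn)
      rw [hnksum n le_rfl] at h1
      exact_mod_cast h1
    have hA : ∑ k ∈ Finset.range K, (mk k : ℝ) ≤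
        ((e:ℝ)+1) * (n:ℝ) ^ (1 - 1/((e:ℝ)+1+1)) := by
      have hjen := jensen K (fun k => (nk k : ℝ)) (fun k _ => Nat.cast_nonneg _) hβ0 hβ1
      calc ∑ k ∈ Finset.range K, (mk k : ℝ)
          ≤ ∑ k ∈ Finset.range K, ((e:ℝ)+1) * (nk k : ℝ) ^ (1 - 1/((e:ℝ)+1)) :=
            Finset.sum_le_sum (fun k _ => hper k)
        _ = ((e:ℝ)+1) * ∑ k ∈ Finset.range K, (nk k : ℝ) ^ (1 - 1/((e:ℝ)+1)) :=
            (Finset.mul_sum _ _ _).symm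
        _ ≤ ((e:ℝ)+1) * ((K:ℝ) ^ ((1:ℝ) - (1 - 1/((e:ℝ)+1))) *
              (∑ k ∈ Finset.range K, (nk k : ℝ)) ^ (1 - 1/((e:ℝ)+1))) :=
            mul_le_mul_of_nonneg_left hjen hDr.le
        _ ≤ ((e:ℝ)+1) * (((n:ℝ) ^ (1/((e:ℝ)+1+1))) ^ ((1:ℝ) - (1 - 1/((e:ℝ)+1))) *
              ((n:ℝ)) ^ (1 - 1/((e:ℝ)+1))) := by
            apply mul_le_mul_of_nonneg_left _ hDr.le
            apply mul_le_mul
            · exact Real.rpow_le_rpow (Nat.cast_nonneg _) hKle (by linarith)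
            · exact Real.rpow_le_rpow (Finset.sum_nonneg (fun k _ => Nat.cast_nonneg _))
                hsubsum hβ0
            · exact Real.rpow_nonneg (Finset.sum_nonneg (fun k _ => Nat.cast_nonneg _)) _
            · positivity
        _ = ((e:ℝ)+1) * (n:ℝ) ^ (1 - 1/((e:ℝ)+1+1)) := by
            have hne1 : ((e:ℝ)+1) ≠ 0 := ne_of_gt hDr
            have hne2 : ((e:ℝ)+1+1) ≠ 0 := ne_of_gt hdr
            rw [← Real.rpow_mul hnpos.le, ← Real.rpow_add hnpos]
            congr 2
            field_simp
            ring
    -- tail sum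
    have hnK : (K+1) * nk K ≤ n := by
      have h1 : ∑ _k ∈ Finset.range (K+1), nk K ≤ ∑ k ∈ Finset.range (K+1), nk k :=
        Finset.sum_le_sum (fun k hk => hanti k K (by
          have := Finset.mem_range.mp hk; omega))
      have h2 : ∑ k ∈ Finset.range (K+1), nk k ≤ ∑ k ∈ Finset.range (K+n), nk k :=
        Finset.sum_le_sum_of_subset (Finset.range_subset_range.mpr (by omega))
      rw [hnksum (K+n) (by omega)] at h2
      simp only [Finset.sum_const, Finset.card_range, smul_eq_mul] at h1
      omega
    have hB : ∑ k ∈ Finset.Ico K n, (mk k : ℝ) ≤ (n:ℝ) ^ (1 - 1/((e:ℝ)+1+1)) := by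
      have htel : ∑ k ∈ Finset.Ico K n, ((nk k : ℝ) - (nk (k+1) : ℝ)) =
          (nk K : ℝ) - (nk n : ℝ) := by
        rw [Finset.sum_Ico_eq_sum_range]
        have h2 := Finset.sum_range_sub' (fun j => (nk (K + j) : ℝ)) (n - K)
        simp only [Nat.add_zero] at h2
        have h3 : K + (n - K) = n := by omega
        rw [h3] at h2
        exact h2
      calc ∑ k ∈ Finset.Ico K n, (mk k : ℝ)
          ≤ ∑ k ∈ Finset.Ico K n, ((nk k : ℝ) - (nk (k+1) : ℝ)) := by
            apply Finset.sum_le_sum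
            intro k _
            have h2 := hanti k (k+1) (Nat.le_succ k)
            calc (mk k : ℝ) ≤ ((nk k - nk (k+1) : ℕ) : ℝ) := by exact_mod_cast hmk2 k
              _ = (nk k : ℝ) - (nk (k+1) : ℝ) := by rw [Nat.cast_sub h2]
        _ = (nk K : ℝ) - (nk n : ℝ) := htel
        _ ≤ (nk K : ℝ) := by
            have : (0:ℝ) ≤ (nk n : ℝ) := Nat.cast_nonneg _
            linarith
        _ ≤ (n:ℝ) / ((K:ℝ)+1) := by
            rw [le_div_iff₀ (by positivity)]
            calc (nk K : ℝ) * ((K:ℝ)+1) = (((K+1) * nk K : ℕ) : ℝ) := by push_cast; ring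
              _ ≤ (n:ℝ) := by exact_mod_cast hnK
        _ ≤ (n:ℝ) / ((n:ℝ) ^ (1/((e:ℝ)+1+1))) := by
            apply div_le_div_of_nonneg_left hnpos.le hrpos hKgt.le
        _ = (n:ℝ) ^ (1 - 1/((e:ℝ)+1+1)) := by
            rw [Real.rpow_sub hnpos, Real.rpow_one]
    -- assemble
    have hsplit : (∑ k ∈ Finset.range K, (mk k : ℝ)) + (∑ k ∈ Finset.Ico K n, (mk k : ℝ)) =
        ∑ k ∈ Finset.range n, (mk k : ℝ) := Finset.sum_range_add_sum_Ico _ hKn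
    have hfinal : ((maxAntichain Q).card : ℝ) ≤
        (((e:ℝ)+1) + 1) * (n:ℝ) ^ (1 - 1/((e:ℝ)+1+1)) := by
      calc ((maxAntichain Q).card : ℝ) = ∑ k ∈ Finset.range n, (mk k : ℝ) := by
            rw [hMsum]; push_cast; ring
        _ = (∑ k ∈ Finset.range K, (mk k : ℝ)) + (∑ k ∈ Finset.Ico K n, (mk k : ℝ)) :=
            hsplit.symm
        _ ≤ ((e:ℝ)+1) * (n:ℝ) ^ (1 - 1/((e:ℝ)+1+1)) + (n:ℝ) ^ (1 - 1/((e:ℝ)+1+1)) :=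
            add_le_add hA hB
        _ = (((e:ℝ)+1) + 1) * (n:ℝ) ^ (1 - 1/((e:ℝ)+1+1)) := by ring
    have hcaste : ((e+1:ℕ):ℝ) = (e:ℝ) + 1 := by push_cast; ring
    rw [hcaste]
    exact hfinal

end Stmt7

theorem stmt_7 (d n : ℕ) (hd : 2 ≤ d) (hn : 1 ≤ n) (Q : Finset (Fin d → ℕ))
    (hQ : IsLowerFinset Q) (hcard : Q.card = n) :
    ((maxAntichain Q).card : ℝ) ≤ d * (n : ℝ) ^ (1 - 1 / (d : ℝ)) := by
  obtain ⟨e, rfl⟩ : ∃ e, d = e + 1 := ⟨d - 1, by omega⟩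
  have h := Stmt7.key e n hn Q hQ hcard
  push_cast
  exact h
end

section
/- Let d, n ≥ 1 be integers. The number p_d(n) of lower sets in ℤ_{≥0}^d of cardinality exactly n satisfies p_d(n) ≥ C(d+n-2, n-1), the binomial coefficient (d+n-2) choose (n-1). -/
/-- The number of lower sets of cardinality `n` in `ℤ_{≥0}^d`. -/
noncomputable def numLowerSets (d n : ℕ) : ℕ :=
  Set.ncard {Q : Finset (Fin d → ℕ) | IsLowerFinset Q ∧ Q.card = n}

/-!
A lower set containing `x` contains the `x i + 1` points `k • e_i` with `k ≤ x i`, so the lower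
sets of size `n` lie in the box `{0, …, n - 1}^d` and are finitely many. Conversely every
`a : Fin d → ℕ` gives a lower set of size `∑ i, a i + 1`, the "staircase" made of the origin and
the points `k • e_i` with `1 ≤ k ≤ a i`, and distinct `a` give distinct staircases. The vectors
with `∑ i, a i = n - 1` are the multisets of size `n - 1` on `Fin d`, and there are
`(d + n - 2).choose (n - 1)` of them.
-/

lemma IsLowerFinset.single_mem {d : ℕ} {Q : Finset (Fin d → ℕ)} (hQ : IsLowerFinset Q)
    {x : Fin d → ℕ} (hx : x ∈ Q) (i : Fin d) {k : ℕ} (hk : k ≤ x i) : Pi.single i k ∈ Q :=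
  hQ x hx _ fun j => by
    rcases eq_or_ne j i with rfl | hji
    · simpa using hk
    · simp [hji]

lemma IsLowerFinset.apply_lt_card {d : ℕ} {Q : Finset (Fin d → ℕ)} (hQ : IsLowerFinset Q)
    {x : Fin d → ℕ} (hx : x ∈ Q) (i : Fin d) : x i < Q.card := by
  have hsub : (Finset.range (x i + 1)).image (Pi.single i) ⊆ Q := by
    simp only [Finset.image_subset_iff, Finset.mem_range, Nat.lt_succ_iff]
    exact fun k hk => hQ.single_mem hx i hk
  have h := Finset.card_le_card hsub
  rwa [Finset.card_image_of_injective _ (Pi.single_injective i), Finset.card_range] at h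

lemma finite_setOf_isLowerFinset_card (d n : ℕ) :
    {Q : Finset (Fin d → ℕ) | IsLowerFinset Q ∧ Q.card = n}.Finite := by
  refine (Fintype.piFinset fun _ : Fin d => Finset.range n).powerset.finite_toSet.subset ?_
  rintro Q ⟨hQ, rfl⟩
  simp only [Finset.coe_powerset, Set.mem_preimage, Set.mem_powerset_iff, Finset.coe_subset]
  intro x hx
  simpa using hQ.apply_lt_card hx

def stair {d : ℕ} (a : Fin d → ℕ) : Finset (Fin d → ℕ) :=
  insert 0 (Finset.univ.biUnion fun i => (Finset.Icc 1 (a i)).image (Pi.single i))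

lemma mem_stair {d : ℕ} {a x : Fin d → ℕ} :
    x ∈ stair a ↔ x = 0 ∨ ∃ i, ∃ k, (1 ≤ k ∧ k ≤ a i) ∧ Pi.single i k = x := by
  simp [stair]

lemma single_mem_stair_iff {d : ℕ} {a : Fin d → ℕ} {i : Fin d} {k : ℕ} :
    Pi.single i k ∈ stair a ↔ k ≤ a i := by
  rcases Nat.eq_zero_or_pos k with rfl | hk
  · simp [stair]
  constructor
  · rw [mem_stair]
    rintro (h0 | ⟨j, l, ⟨hl, hla⟩, hji⟩)
    · simpa [hk.ne'] using congrFun h0 i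
    · obtain rfl : j = i := by
        by_contra hne
        have h := congrFun hji j
        simp only [Pi.single_eq_same, ne_eq, hne, not_false_eq_true, Pi.single_eq_of_ne] at h
        omega
      rwa [← Pi.single_injective (M := fun _ => ℕ) j hji]
  · intro hka
    exact mem_stair.mpr (Or.inr ⟨i, k, ⟨hk, hka⟩, rfl⟩)

lemma isLowerFinset_stair {d : ℕ} (a : Fin d → ℕ) : IsLowerFinset (stair a) := by
  intro x hx y hyx
  rcases mem_stair.mp hx with rfl | ⟨i, k, ⟨-, hka⟩, rfl⟩
  · obtain rfl : y = 0 := funext fun j => Nat.le_zero.mp (hyx j)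
    exact Finset.mem_insert_self _ _
  · have hy : y = Pi.single i (y i) := funext fun j => by
      rcases eq_or_ne j i with rfl | hji
      · simp
      · simpa [hji] using hyx j
    rw [hy, single_mem_stair_iff]
    exact (by simpa using hyx i : y i ≤ k).trans hka

lemma card_stair {d : ℕ} (a : Fin d → ℕ) : (stair a).card = ∑ i, a i + 1 := by
  have hzero : (0 : Fin d → ℕ) ∉
      Finset.univ.biUnion fun i => (Finset.Icc 1 (a i)).image (Pi.single i) := by
    simp only [Finset.mem_biUnion, Finset.mem_image, Finset.mem_Icc, not_exists, not_and]
    intro i _ k hk h0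
    have h := congrFun h0 i
    simp only [Pi.single_eq_same, Pi.zero_apply] at h
    omega
  have hdisj : ((Finset.univ : Finset (Fin d)) : Set (Fin d)).PairwiseDisjoint
      fun i => (Finset.Icc 1 (a i)).image (Pi.single i) := by
    intro i _ j _ hij
    simp only [Function.onFun, Finset.disjoint_left, Finset.mem_image, Finset.mem_Icc]
    rintro _ ⟨k, hk, rfl⟩ ⟨l, hl, hlk⟩
    have h := congrFun hlk i
    simp only [ne_eq, hij, not_false_eq_true, Pi.single_eq_of_ne, Pi.single_eq_same] at h
    omega
  rw [stair, Finset.card_insert_of_notMem hzero, Finset.card_biUnion hdisj]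
  congr 1
  refine Finset.sum_congr rfl fun i _ => ?_
  rw [Finset.card_image_of_injective _ (Pi.single_injective (M := fun _ => ℕ) i), Nat.card_Icc,
    Nat.add_sub_cancel]

lemma stair_injective {d : ℕ} : Function.Injective (stair (d := d)) := by
  intro a b hab
  funext i
  apply le_antisymm
  · rw [← single_mem_stair_iff, ← hab, single_mem_stair_iff]
  · rw [← single_mem_stair_iff, hab, single_mem_stair_iff]

theorem stmt_8_general (d n : ℕ) (hn : 1 ≤ n) :
    (d + n - 2).choose (n - 1) ≤ numLowerSets d n := by
  classical
  have hcount (m : Sym (Fin d) (n - 1)) : ∑ i, m.val.count i = n - 1 := by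
    rw [Multiset.sum_count_eq_card fun i _ => Finset.mem_univ i, m.2]
  have hchoose : (d + n - 2).choose (n - 1) = Nat.card (Sym (Fin d) (n - 1)) := by
    rw [Nat.card_eq_fintype_card, Sym.card_sym_eq_choose, Fintype.card_fin]
    congr 1
    omega
  rw [hchoose, numLowerSets, ← Nat.card_coe_set_eq]
  have := (finite_setOf_isLowerFinset_card d n).to_subtype
  refine Nat.card_le_card_of_injective (fun m => ⟨stair fun i => m.val.count i,
    isLowerFinset_stair _, by rw [card_stair, hcount]; omega⟩) fun m₁ m₂ h => ?_
  have hstair := stair_injective (congrArg Subtype.val h)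
  exact Sym.ext (Multiset.ext.mpr fun i => congrFun hstair i)

theorem stmt_8 (d n : ℕ) (hd : 1 ≤ d) (hn : 1 ≤ n) :
    (d + n - 2).choose (n - 1) ≤ numLowerSets d n :=
  stmt_8_general d n hn
end

section
/- Let d, n ≥ 1 be integers. The number p_d(n) of lower sets in ℤ_{≥0}^d of cardinality exactly n satisfies p_d(n) ≤ d^{n-1}. -/
namespace LowerAux

variable {d : ℕ}

noncomputable instance lexLinear : LinearOrder (Lex (Fin d → ℕ)) :=
  @Pi.Lex.linearOrder (Fin d) (fun _ => ℕ) inferInstance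
    (inferInstance : WellFoundedLT (Fin d)) (fun _ => inferInstance)

lemma lex_lt_def {x y : Fin d → ℕ} :
    toLex x < toLex y ↔ ∃ i, (∀ j, j < i → x j = y j) ∧ x i < y i := Iff.rfl

lemma lex_le_of_le {x y : Fin d → ℕ} (h : ∀ j, x j ≤ y j) : toLex x ≤ toLex y := by
  classical
  rcases eq_or_ne x y with rfl | hne
  · exact le_refl _
  · have hs : (Finset.univ.filter (fun j => x j ≠ y j)).Nonempty := by
      rw [Function.ne_iff] at hne
      obtain ⟨j, hj⟩ := hne
      exact ⟨j, by simpa using hj⟩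
    have himem : x ((Finset.univ.filter (fun j => x j ≠ y j)).min' hs) ≠
        y ((Finset.univ.filter (fun j => x j ≠ y j)).min' hs) := by
      have := Finset.min'_mem _ hs
      simpa using this
    refine le_of_lt (lex_lt_def.mpr ⟨_, fun j hj => ?_, lt_of_le_of_ne (h _) himem⟩)
    by_contra hc
    exact absurd hj (not_lt.mpr (Finset.min'_le _ j (by simpa using hc)))

lemma zero_mem {Q : Finset (Fin d → ℕ)} (hQ : IsLowerFinset Q) (h : Q.Nonempty) :
    (0 : Fin d → ℕ) ∈ Q := by
  obtain ⟨x, hx⟩ := h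
  exact hQ x hx 0 (fun i => Nat.zero_le _)

/-- every coordinate of a point in a lower set of card `m` is `< m`. -/
lemma coord_lt {Q : Finset (Fin d → ℕ)} (hQ : IsLowerFinset Q) {x : Fin d → ℕ}
    (hx : x ∈ Q) (i : Fin d) : x i < Q.card := by
  classical
  have hsub : (Finset.range (x i + 1)).image (fun k => Function.update x i k) ⊆ Q := by
    intro y hy
    simp only [Finset.mem_image, Finset.mem_range] at hy
    obtain ⟨k, hk, rfl⟩ := hy
    refine hQ x hx _ (fun j => ?_)
    rcases eq_or_ne j i with rfl | hj
    · simpa [Function.update_self] using Nat.lt_succ_iff.mp hk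
    · simp [Function.update_of_ne hj]
  have hcard : ((Finset.range (x i + 1)).image (fun k => Function.update x i k)).card
      = x i + 1 := by
    rw [Finset.card_image_of_injOn, Finset.card_range]
    intro a _ b _ hab
    have := congrFun hab i
    simpa using this
  have := Finset.card_le_card hsub
  omega

lemma setFinite (m : ℕ) :
    {Q : Finset (Fin d → ℕ) | IsLowerFinset Q ∧ Q.card = m}.Finite := by
  classical
  set B : Finset (Fin d → ℕ) :=
    Finset.image (fun f : Fin d → Fin m => fun i => ((f i : ℕ))) Finset.univ with hB
  refine Set.Finite.subset (B.powerset.finite_toSet) ?_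
  intro Q hQ
  simp only [Set.mem_setOf_eq] at hQ
  simp only [Finset.mem_coe, Finset.mem_powerset]
  intro x hx
  have hlt : ∀ i, x i < m := fun i => hQ.2 ▸ coord_lt hQ.1 hx i
  simp only [hB, Finset.mem_image]
  exact ⟨fun i => ⟨x i, hlt i⟩, Finset.mem_univ _, rfl⟩

noncomputable def lexMax (Q : Finset (Fin d → ℕ)) : Fin d → ℕ :=
  if h : Q.Nonempty then
    ofLex ((Q.image (toLex : (Fin d → ℕ) → Lex (Fin d → ℕ))).max' (h.image _)) else 0

lemma lexMax_mem {Q : Finset (Fin d → ℕ)} (h : Q.Nonempty) : lexMax Q ∈ Q := by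
  rw [lexMax, dif_pos h]
  have := (Q.image (toLex : (Fin d → ℕ) → Lex (Fin d → ℕ))).max'_mem (h.image _)
  simp only [Finset.mem_image] at this
  obtain ⟨x, hx, hx'⟩ := this
  rwa [← hx']

lemma le_lexMax {Q : Finset (Fin d → ℕ)} (h : Q.Nonempty) {x : Fin d → ℕ} (hx : x ∈ Q) :
    toLex x ≤ toLex (lexMax Q) := by
  rw [lexMax, dif_pos h]
  exact (Q.image (toLex : (Fin d → ℕ) → Lex (Fin d → ℕ))).le_max'
    _ (Finset.mem_image_of_mem _ hx)

lemma lt_lexMax {Q : Finset (Fin d → ℕ)} (h : Q.Nonempty) {x : Fin d → ℕ} (hx : x ∈ Q)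
    (hne : x ≠ lexMax Q) : toLex x < toLex (lexMax Q) :=
  lt_of_le_of_ne (le_lexMax h hx) (fun hc => hne (toLex.injective hc))

/-- The largest index with a nonzero coordinate. -/
noncomputable def maxSupp (hd : 0 < d) (q : Fin d → ℕ) : Fin d := by
  classical
  exact if h : (Finset.univ.filter (fun i => q i ≠ 0)).Nonempty then
    (Finset.univ.filter (fun i => q i ≠ 0)).max' h else ⟨0, hd⟩

lemma maxSupp_nonempty {q : Fin d → ℕ} (hq : q ≠ 0) [DecidablePred (fun i => q i ≠ 0)] :
    (Finset.univ.filter (fun i => q i ≠ 0)).Nonempty := by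
  rw [Function.ne_iff] at hq
  obtain ⟨i, hi⟩ := hq
  exact ⟨i, by simpa using hi⟩

lemma maxSupp_pos (hd : 0 < d) {q : Fin d → ℕ} (hq : q ≠ 0) : q (maxSupp hd q) ≠ 0 := by
  classical
  rw [maxSupp]
  simp only [dif_pos (maxSupp_nonempty hq)]
  have := (Finset.univ.filter (fun i => q i ≠ 0)).max'_mem (maxSupp_nonempty hq)
  simpa using this

lemma maxSupp_spec (hd : 0 < d) {q : Fin d → ℕ} (hq : q ≠ 0) {j : Fin d}
    (hj : maxSupp hd q < j) : q j = 0 := by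
  classical
  rw [maxSupp] at hj
  simp only [dif_pos (maxSupp_nonempty hq)] at hj
  by_contra hc
  exact absurd hj (not_lt.mpr ((Finset.univ.filter (fun i => q i ≠ 0)).le_max'
    j (by simpa using hc)))

/-- Key uniqueness lemma: the new top element is determined by `R` and its max support. -/
lemma key (hd : 0 < d) (R : Finset (Fin d → ℕ)) (q q' : Fin d → ℕ)
    (hlow' : IsLowerFinset (insert q' R))
    (hmax : ∀ x ∈ R, toLex x < toLex q)
    (hq0 : q ≠ 0) (hq'0 : q' ≠ 0)
    (hs : maxSupp hd q = maxSupp hd q')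
    (hlt : toLex q < toLex q') : False := by
  classical
  obtain ⟨i₀, hagree, hi₀⟩ := lex_lt_def.mp hlt
  set i : Fin d := maxSupp hd q with hi
  have hq'i : q' i ≠ 0 := by rw [hs]; exact maxSupp_pos hd hq'0
  set r : Fin d → ℕ := fun j => if j = i then q' i - 1 else q' j with hr
  have hrij : ∀ j, j ≠ i → r j = q' j := fun j hj => by simp [hr, hj]
  have hri : r i = q' i - 1 := by simp [hr]
  have hrle : ∀ j, r j ≤ q' j := by
    intro j
    rcases eq_or_ne j i with rfl | hj
    · rw [hri]; omega
    · rw [hrij j hj]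
  have hrmem : r ∈ insert q' R := hlow' q' (Finset.mem_insert_self _ _) r hrle
  have hrne : r ≠ q' := by
    intro hc
    have := congrFun hc i
    rw [hri] at this
    omega
  have hrR : r ∈ R := (Finset.mem_insert.mp hrmem).resolve_left hrne
  have hrlt : toLex r < toLex q := hmax r hrR
  rcases lt_trichotomy i₀ i with hcase | hcase | hcase
  · -- i₀ < i : then q < r lexicographically, contradicting r < q
    have : toLex q < toLex r := by
      refine lex_lt_def.mpr ⟨i₀, fun j hj => ?_, ?_⟩
      · rw [hagree j hj, hrij j (ne_of_lt (hj.trans hcase))]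
      · rw [hrij i₀ (ne_of_lt hcase)]; exact hi₀
    exact lt_asymm this hrlt
  · -- i₀ = i : then q ≤ r pointwise, contradicting r < q
    rw [hcase] at hi₀ hagree
    have hqler : ∀ j, q j ≤ r j := by
      intro j
      rcases lt_trichotomy j i with hj | rfl | hj
      · rw [hrij j (ne_of_lt hj), ← hagree j hj]
      · rw [hri]; omega
      · have : q j = 0 := maxSupp_spec hd hq0 hj
        omega
    exact absurd hrlt (not_lt.mpr (lex_le_of_le hqler))
  · -- i < i₀ : both coordinates at i₀ vanish, contradicting q i₀ < q' i₀
    have h1 : q i₀ = 0 := maxSupp_spec hd hq0 hcase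
    have h2 : q' i₀ = 0 := maxSupp_spec hd hq'0 (by rw [← hs]; exact hcase)
    omega

end LowerAux

open LowerAux in
theorem stmt_9 (d n : ℕ) (hd : 1 ≤ d) (hn : 1 ≤ n) :
    numLowerSets d n ≤ d ^ (n - 1) := by
  classical
  induction n with
  | zero => omega
  | succ n ih =>
    rcases Nat.eq_zero_or_pos n with rfl | hn1
    · -- base case n = 1
      have hsub : {Q : Finset (Fin d → ℕ) | IsLowerFinset Q ∧ Q.card = 1} ⊆
          {({0} : Finset (Fin d → ℕ))} := by
        intro Q hQ
        simp only [Set.mem_setOf_eq] at hQ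
        have h0 : (0 : Fin d → ℕ) ∈ Q := zero_mem hQ.1 (Finset.card_pos.mp (by omega))
        have := Finset.eq_of_subset_of_card_le (Finset.singleton_subset_iff.mpr h0)
          (by rw [hQ.2]; simp)
        simp [this.symm]
      calc numLowerSets d 1 ≤ ({({0} : Finset (Fin d → ℕ))} : Set _).ncard :=
            Set.ncard_le_ncard hsub (Set.finite_singleton _)
        _ = 1 := Set.ncard_singleton _
        _ ≤ d ^ (1 - 1) := by simp
    · -- inductive step: numLowerSets d (n+1) ≤ d * numLowerSets d n
      have hstep : numLowerSets d (n + 1) ≤ numLowerSets d n * d := by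
        have hfin1 := setFinite (d := d) (n + 1)
        have hfin2 := setFinite (d := d) n
        rw [numLowerSets, Set.ncard_eq_toFinset_card _ hfin1,
            numLowerSets, Set.ncard_eq_toFinset_card _ hfin2]
        have hprod : hfin2.toFinset.card * d =
            (hfin2.toFinset ×ˢ (Finset.univ : Finset (Fin d))).card := by
          rw [Finset.card_product, Finset.card_univ, Fintype.card_fin]
        rw [hprod]
        refine Finset.card_le_card_of_injOn
          (fun Q => (Q.erase (lexMax Q), maxSupp hd (lexMax Q))) ?_ ?_
        · -- maps into target
          intro Q hQ
          rw [Finset.mem_coe, Set.Finite.mem_toFinset] at hQ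
          obtain ⟨hlow, hcard⟩ := hQ
          have hne : Q.Nonempty := Finset.card_pos.mp (by omega)
          have hmem := lexMax_mem hne
          have herase_low : IsLowerFinset (Q.erase (lexMax Q)) := by
            intro x hx y hy
            have hxQ : x ∈ Q := Finset.mem_of_mem_erase hx
            have hyQ : y ∈ Q := hlow x hxQ y hy
            rw [Finset.mem_erase]
            refine ⟨fun hc => ?_, hyQ⟩
            subst hc
            have h1 : toLex x < toLex (lexMax Q) :=
              lt_lexMax hne hxQ (Finset.ne_of_mem_erase hx)
            have h2 : toLex (lexMax Q) ≤ toLex x := lex_le_of_le hy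
            exact absurd h1 (not_lt.mpr h2)
          rw [Finset.mem_coe, Finset.mem_product]
          constructor
          · rw [Set.Finite.mem_toFinset]
            exact ⟨herase_low, by rw [Finset.card_erase_of_mem hmem, hcard]; omega⟩
          · exact Finset.mem_univ _
        · -- injectivity
          intro Q₁ hQ₁ Q₂ hQ₂ hF
          simp only [Finset.mem_coe, Set.Finite.mem_toFinset, Set.mem_setOf_eq] at hQ₁ hQ₂
          obtain ⟨hlow₁, hcard₁⟩ := hQ₁
          obtain ⟨hlow₂, hcard₂⟩ := hQ₂
          have hne₁ : Q₁.Nonempty := Finset.card_pos.mp (by omega)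
          have hne₂ : Q₂.Nonempty := Finset.card_pos.mp (by omega)
          set q := lexMax Q₁ with hq
          set q' := lexMax Q₂ with hq'
          have hR : Q₁.erase q = Q₂.erase q' := congrArg Prod.fst hF
          have hsupp : maxSupp hd q = maxSupp hd q' := congrArg Prod.snd hF
          set R := Q₁.erase q with hRdef
          have hq1mem := lexMax_mem hne₁
          have hq2mem := lexMax_mem hne₂
          have hins1 : insert q R = Q₁ := Finset.insert_erase hq1mem
          have hins2 : insert q' R = Q₂ := by rw [hR]; exact Finset.insert_erase hq2mem
          have hmax1 : ∀ x ∈ R, toLex x < toLex q := fun x hx =>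
            lt_lexMax hne₁ (Finset.mem_of_mem_erase hx) (Finset.ne_of_mem_erase hx)
          have hmax2 : ∀ x ∈ R, toLex x < toLex q' := by
            intro x hx
            rw [hR] at hx
            exact lt_lexMax hne₂ (Finset.mem_of_mem_erase hx) (Finset.ne_of_mem_erase hx)
          have hRcard : R.card = n := by
            rw [hRdef, Finset.card_erase_of_mem hq1mem, hcard₁]
            omega
          have hRne : R.Nonempty := Finset.card_pos.mp (by omega)
          have hq0 : q ≠ 0 := by
            intro hc
            obtain ⟨x, hx⟩ := hRne
            have := hmax1 x hx
            rw [hc] at this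
            exact absurd this (not_lt.mpr (lex_le_of_le (fun i => Nat.zero_le _)))
          have hq'0 : q' ≠ 0 := by
            intro hc
            obtain ⟨x, hx⟩ := hRne
            have := hmax2 x hx
            rw [hc] at this
            exact absurd this (not_lt.mpr (lex_le_of_le (fun i => Nat.zero_le _)))
          have hqq' : q = q' := by
            rcases lt_trichotomy (toLex q) (toLex q') with hlt | heq | hlt
            · exact absurd (key hd R q q' (hins2 ▸ hlow₂) hmax1 hq0 hq'0 hsupp hlt) id
            · exact toLex.injective heq
            · exact absurd (key hd R q' q (hins1 ▸ hlow₁) hmax2 hq'0 hq0 hsupp.symm hlt) id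
          rw [← hins1, ← hins2, hqq']
      have hpow : d ^ (n - 1) * d = d ^ n := by
        have h1 : n - 1 + 1 = n := by omega
        rw [← pow_succ, h1]
      calc numLowerSets d (n + 1) ≤ numLowerSets d n * d := hstep
        _ ≤ d ^ (n - 1) * d := Nat.mul_le_mul_right d (ih hn1)
        _ = d ^ n := hpow
        _ = d ^ (n + 1 - 1) := by simp
end
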